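/- arXiv:0809.4882 — 3 statements merged into one kernel-verified Lean document; each statement's English description precedes it below -/
import Mathlib

section
/- Refined Chernoff bound: Let X_1, ..., X_n be i.i.d. random variables taking values in [0,1] with mean μ, and let X̄ denote their average. For α > 0 define r(α, x) = α/n + sqrt(α·x/n). Then with probability at least 1 − e^{−Ω(α)}, both |X̄ − μ| < r(α, X̄) and r(α, X̄) < 3·r(α, μ) hold. -/
open MeasureTheory ProbabilityTheory

lemma my_exp_quad {t : ℝ} (h0 : 0 ≤ t) (h1 : t ≤ 1) :
    Real.exp t ≤ 1 + t + (3/4) * t ^ 2 := by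
  have h := Real.exp_bound' h0 h1 (n := 2) (by norm_num)
  simp [Finset.sum_range_succ, Nat.factorial] at h
  nlinarith [h]

lemma my_exp_neg_quad {t : ℝ} (h0 : 0 ≤ t) :
    Real.exp (-t) ≤ 1 - t + t ^ 2 := by
  have h1 : t + 1 ≤ Real.exp t := Real.add_one_le_exp t
  have h2 : Real.exp (-t) * Real.exp t = 1 := by
    rw [← Real.exp_add]; simp
  nlinarith [Real.exp_pos t, Real.exp_pos (-t)]

section aux
variable {Ω : Type} [MeasurableSpace Ω] {μ : Measure Ω} [IsProbabilityMeasure μ]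

lemma my_int_of_bdd {f : Ω → ℝ} (hf : AEStronglyMeasurable f μ) {C : ℝ}
    (h : ∀ᵐ ω ∂μ, |f ω| ≤ C) : Integrable f μ :=
  (integrable_const C).mono' hf (h.mono fun ω hω => by simpa using hω)

lemma my_int_X {X : Ω → ℝ} (hX : Measurable X) (hb : ∀ᵐ ω ∂μ, X ω ∈ Set.Icc (0:ℝ) 1) :
    Integrable X μ :=
  my_int_of_bdd hX.aestronglyMeasurable (C := 1)
    (hb.mono fun ω hω => abs_le.2 ⟨by linarith [hω.1], hω.2⟩)

lemma my_int_exp {X : Ω → ℝ} (hX : Measurable X) (hb : ∀ᵐ ω ∂μ, X ω ∈ Set.Icc (0:ℝ) 1)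
    (t : ℝ) : Integrable (fun ω => Real.exp (t * X ω)) μ := by
  refine my_int_of_bdd ((hX.const_mul t).exp).aestronglyMeasurable (C := Real.exp |t|)
    (hb.mono fun ω hω => ?_)
  rw [abs_of_pos (Real.exp_pos _), Real.exp_le_exp]
  calc t * X ω ≤ |t * X ω| := le_abs_self _
    _ = |t| * |X ω| := abs_mul _ _
    _ ≤ |t| * 1 := by
        apply mul_le_mul_of_nonneg_left _ (abs_nonneg t)
        rw [abs_le]; exact ⟨by linarith [hω.1], hω.2⟩
    _ = |t| := mul_one _

lemma my_mgf_le {X : Ω → ℝ} (hX : Measurable X) (hb : ∀ᵐ ω ∂μ, X ω ∈ Set.Icc (0:ℝ) 1)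
    (t : ℝ) : mgf X μ t ≤ Real.exp ((∫ ω, X ω ∂μ) * (Real.exp t - 1)) := by
  have key : mgf X μ t ≤ 1 + (∫ ω, X ω ∂μ) * (Real.exp t - 1) := by
    have h1 : mgf X μ t ≤ ∫ ω, (1 + X ω * (Real.exp t - 1)) ∂μ := by
      refine integral_mono_ae (my_int_exp hX hb t)
        ((integrable_const 1).add ((my_int_X hX hb).mul_const _))
        (hb.mono fun ω hω => ?_)
      have := convexOn_exp.2 (Set.mem_univ (0:ℝ)) (Set.mem_univ t)
        (by linarith [hω.2] : (0:ℝ) ≤ 1 - X ω) hω.1 (by ring)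
      simp only [smul_eq_mul, mul_zero, Real.exp_zero] at this
      calc Real.exp (t * X ω) = Real.exp (0 + X ω * t) := by rw [zero_add, mul_comm]
        _ ≤ (1 - X ω) * 1 + X ω * Real.exp t := this
        _ = 1 + X ω * (Real.exp t - 1) := by ring
    rwa [integral_add (integrable_const 1) ((my_int_X hX hb).mul_const _),
      integral_const, integral_mul_const, probReal_univ, smul_eq_mul,
      one_mul] at h1
  calc mgf X μ t ≤ 1 + (∫ ω, X ω ∂μ) * (Real.exp t - 1) := key
    _ ≤ Real.exp ((∫ ω, X ω ∂μ) * (Real.exp t - 1)) := by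
        have := Real.add_one_le_exp ((∫ ω, X ω ∂μ) * (Real.exp t - 1))
        linarith

end aux

section chernoff
variable {Ω : Type} [MeasurableSpace Ω] {μ : Measure Ω} [IsProbabilityMeasure μ]
  {n : ℕ} {X : Fin n → Ω → ℝ}

lemma my_mgf_sum_le (hmeas : ∀ i, Measurable (X i))
    (hindep : iIndepFun X μ)
    (hb : ∀ i, ∀ᵐ ω ∂μ, X i ω ∈ Set.Icc (0:ℝ) 1)
    {m : ℝ} (hints : ∀ i, ∫ ω, X i ω ∂μ = m) (t : ℝ) :
    mgf (∑ i, X i) μ t ≤ Real.exp ((n : ℝ) * m * (Real.exp t - 1)) := by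
  rw [hindep.mgf_sum hmeas]
  calc ∏ i, mgf (X i) μ t ≤ ∏ _i : Fin n, Real.exp (m * (Real.exp t - 1)) := by
        refine Finset.prod_le_prod (fun i _ => mgf_nonneg) (fun i _ => ?_)
        have := my_mgf_le (hmeas i) (hb i) t
        rwa [hints i] at this
    _ = Real.exp ((n : ℝ) * (m * (Real.exp t - 1))) := by
        rw [Finset.prod_const, Finset.card_univ, Fintype.card_fin, ← Real.exp_nat_mul]
    _ = Real.exp ((n : ℝ) * m * (Real.exp t - 1)) := by ring_nf

lemma my_chernoff_upper (hmeas : ∀ i, Measurable (X i))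
    (hindep : iIndepFun X μ)
    (hb : ∀ i, ∀ᵐ ω ∂μ, X i ω ∈ Set.Icc (0:ℝ) 1)
    {m : ℝ} (hints : ∀ i, ∫ ω, X i ω ∂μ = m) {t : ℝ} (ht : 0 ≤ t) (a : ℝ) :
    (μ {ω | a ≤ ∑ i, X i ω}).toReal ≤ Real.exp (-t * a + (n : ℝ) * m * (Real.exp t - 1)) := by
  have hS : Integrable (fun ω => Real.exp (t * (∑ i, X i) ω)) μ :=
    hindep.integrable_exp_mul_sum hmeas (fun i _ => my_int_exp (hmeas i) (hb i) t)
  have hset : {ω | a ≤ ∑ i, X i ω} = {ω | a ≤ (∑ i, X i) ω} := by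
    ext ω; simp [Finset.sum_apply]
  calc (μ {ω | a ≤ ∑ i, X i ω}).toReal
      ≤ Real.exp (-t * a) * mgf (∑ i, X i) μ t := by
        rw [hset]; exact measure_ge_le_exp_mul_mgf a ht hS
    _ ≤ Real.exp (-t * a) * Real.exp ((n : ℝ) * m * (Real.exp t - 1)) := by
        exact mul_le_mul_of_nonneg_left (my_mgf_sum_le hmeas hindep hb hints t)
          (Real.exp_pos _).le
    _ = Real.exp (-t * a + (n : ℝ) * m * (Real.exp t - 1)) := (Real.exp_add _ _).symm

lemma my_chernoff_lower (hmeas : ∀ i, Measurable (X i))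
    (hindep : iIndepFun X μ)
    (hb : ∀ i, ∀ᵐ ω ∂μ, X i ω ∈ Set.Icc (0:ℝ) 1)
    {m : ℝ} (hints : ∀ i, ∫ ω, X i ω ∂μ = m) {t : ℝ} (ht : 0 ≤ t) (a : ℝ) :
    (μ {ω | ∑ i, X i ω ≤ a}).toReal ≤ Real.exp (t * a + (n : ℝ) * m * (Real.exp (-t) - 1)) := by
  have hS : Integrable (fun ω => Real.exp ((-t) * (∑ i, X i) ω)) μ :=
    hindep.integrable_exp_mul_sum hmeas (fun i _ => my_int_exp (hmeas i) (hb i) (-t))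
  have hset : {ω | ∑ i, X i ω ≤ a} = {ω | (∑ i, X i) ω ≤ a} := by
    ext ω; simp [Finset.sum_apply]
  calc (μ {ω | ∑ i, X i ω ≤ a}).toReal
      ≤ Real.exp (-(-t) * a) * mgf (∑ i, X i) μ (-t) := by
        rw [hset]; exact measure_le_le_exp_mul_mgf a (neg_nonpos.2 ht) hS
    _ ≤ Real.exp (t * a) * Real.exp ((n : ℝ) * m * (Real.exp (-t) - 1)) := by
        rw [neg_neg]
        exact mul_le_mul_of_nonneg_left (my_mgf_sum_le hmeas hindep hb hints (-t))
          (Real.exp_pos _).le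
    _ = Real.exp (t * a + (n : ℝ) * m * (Real.exp (-t) - 1)) := (Real.exp_add _ _).symm

end chernoff

lemma my_sqrt_add_le {a b : ℝ} (ha : 0 ≤ a) (hb : 0 ≤ b) :
    Real.sqrt (a + b) ≤ Real.sqrt a + Real.sqrt b := by
  rw [Real.sqrt_le_iff]
  constructor
  · positivity
  · have h1 := Real.sq_sqrt ha
    have h2 := Real.sq_sqrt hb
    nlinarith [Real.sqrt_nonneg a, Real.sqrt_nonneg b, mul_nonneg (Real.sqrt_nonneg a) (Real.sqrt_nonneg b)]

lemma my_det {β m x : ℝ} (hβ : 0 < β) (hm : 0 ≤ m) (hx : 0 ≤ x)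
    (h1 : x - m < β + Real.sqrt (β * m))
    (h2 : m < β ∨ (m / 2 < x ∧ m - x < β + Real.sqrt (β * m / 2))) :
    |x - m| < β + Real.sqrt (β * x) ∧
      β + Real.sqrt (β * x) < 3 * (β + Real.sqrt (β * m)) := by
  have hsx : 0 ≤ Real.sqrt (β * x) := Real.sqrt_nonneg _
  have hsm : 0 ≤ Real.sqrt (β * m) := Real.sqrt_nonneg _
  have hA : |x - m| < β + Real.sqrt (β * x) := by
    rw [abs_sub_lt_iff]
    constructor
    · rcases le_or_gt m x with hxm | hxm
      · have : Real.sqrt (β * m) ≤ Real.sqrt (β * x) :=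
          Real.sqrt_le_sqrt (by nlinarith)
        linarith
      · linarith
    · rcases h2 with h | ⟨h2a, h2b⟩
      · linarith
      · have : Real.sqrt (β * m / 2) ≤ Real.sqrt (β * x) :=
          Real.sqrt_le_sqrt (by nlinarith)
        linarith
  refine ⟨hA, ?_⟩
  have am : Real.sqrt (β * x) ≤ (β + x) / 2 := by
    have h := Real.sqrt_le_sqrt (show β * x ≤ ((β + x) / 2) ^ 2 by nlinarith [sq_nonneg (β - x)])
    rwa [Real.sqrt_sq (by positivity)] at h
  have hx2 : x < 2 * m + 3 * β := by
    have := (abs_sub_lt_iff.1 hA).1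
    linarith
  have hs2 : Real.sqrt (β * x) ≤ Real.sqrt (2 * (β * m)) + Real.sqrt (3 * β ^ 2) := by
    calc Real.sqrt (β * x) ≤ Real.sqrt (2 * (β * m) + 3 * β ^ 2) :=
          Real.sqrt_le_sqrt (by nlinarith)
      _ ≤ _ := my_sqrt_add_le (by positivity) (by positivity)
  have e2 : Real.sqrt (2 * (β * m)) = Real.sqrt 2 * Real.sqrt (β * m) :=
    Real.sqrt_mul (by norm_num) _
  have e3 : Real.sqrt (3 * β ^ 2) = Real.sqrt 3 * β := by
    rw [Real.sqrt_mul (by norm_num), Real.sqrt_sq hβ.le]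
  have r3 : Real.sqrt 3 < 2 := by
    rw [Real.sqrt_lt' (by norm_num)]; norm_num
  have r2 : Real.sqrt 2 ≤ 3 := by
    rw [Real.sqrt_le_left (by norm_num)]; norm_num
  have : Real.sqrt 2 * Real.sqrt (β * m) ≤ 3 * Real.sqrt (β * m) :=
    mul_le_mul_of_nonneg_right r2 hsm
  nlinarith [hs2, e2, e3]

lemma my_up_exp {N m α : ℝ} (hN : 0 < N) (hm : 0 ≤ m) (hα : 0 < α) :
    ∃ t : ℝ, 0 ≤ t ∧
      -t * (N * m + α + Real.sqrt (α * m * N)) + N * m * (Real.exp t - 1) ≤ -(α / 16) := by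
  rcases le_or_gt (N * m) α with hc | hc
  · refine ⟨1, zero_le_one, ?_⟩
    have hE : Real.exp 1 ≤ 11 / 4 := by
      have := my_exp_quad (t := 1) zero_le_one le_rfl
      norm_num at this ⊢; linarith
    have hs : 0 ≤ Real.sqrt (α * m * N) := Real.sqrt_nonneg _
    have hNm : 0 ≤ N * m := by positivity
    nlinarith
  · have hNm : 0 < N * m := hα.trans hc
    have hm' : 0 < m := by nlinarith
    set t := Real.sqrt (α / (N * m)) with ht_def
    have ht0 : 0 ≤ t := Real.sqrt_nonneg _
    have ht1 : t ≤ 1 := by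
      rw [ht_def, show (1:ℝ) = Real.sqrt 1 by simp]
      exact Real.sqrt_le_sqrt (by rw [div_le_one hNm]; exact hc.le)
    have ht2 : t ^ 2 = α / (N * m) := Real.sq_sqrt (by positivity)
    have ht3 : N * m * t ^ 2 = α := by rw [ht2]; field_simp
    have ht4 : t * Real.sqrt (α * m * N) = α := by
      rw [ht_def, ← Real.sqrt_mul (by positivity)]
      rw [show α / (N * m) * (α * m * N) = α ^ 2 by field_simp]
      exact Real.sqrt_sq hα.le
    have hE : Real.exp t ≤ 1 + t + (3 / 4) * t ^ 2 := my_exp_quad ht0 ht1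
    refine ⟨t, ht0, ?_⟩
    have hmul : N * m * (Real.exp t - 1) ≤ N * m * (t + (3 / 4) * t ^ 2) :=
      mul_le_mul_of_nonneg_left (by linarith) hNm.le
    have : N * m * (t + (3 / 4) * t ^ 2) = N * m * t + (3 / 4) * α := by
      rw [mul_add]; rw [show N * m * ((3:ℝ)/4 * t ^ 2) = 3/4 * (N * m * t ^ 2) by ring, ht3]
    nlinarith [mul_nonneg ht0 hα.le]

lemma my_low1_exp {N m α : ℝ} (hm : 0 ≤ m) (hα : 0 < α) (hc : α ≤ N * m) :
    ∃ t : ℝ, 0 ≤ t ∧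
      t * (N * m / 2) + N * m * (Real.exp (-t) - 1) ≤ -(α / 16) := by
  refine ⟨1/4, by norm_num, ?_⟩
  have hE : Real.exp (-(1/4 : ℝ)) ≤ 13 / 16 := by
    have := my_exp_neg_quad (t := 1/4) (by norm_num)
    norm_num at this ⊢; linarith
  have hNm : 0 < N * m := hα.trans_le hc
  nlinarith

lemma my_low2_exp {N m α : ℝ} (hm : 0 ≤ m) (hα : 0 < α) (hc : α ≤ N * m) :
    ∃ t : ℝ, 0 ≤ t ∧
      t * (N * m - (α + Real.sqrt (α * m * N / 2))) + N * m * (Real.exp (-t) - 1) ≤ -(α / 16) := by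
  have hNm : 0 < N * m := hα.trans_le hc
  set D := α + Real.sqrt (α * m * N / 2) with hD_def
  have hsq : Real.sqrt (α * m * N / 2) ^ 2 = α * m * N / 2 := by
    rw [Real.sq_sqrt]; nlinarith
  have hD0 : 0 < D := by
    have := Real.sqrt_nonneg (α * m * N / 2); rw [hD_def]; linarith
  have hD2 : α * m * N / 2 ≤ D ^ 2 := by
    rw [hD_def]; nlinarith [Real.sqrt_nonneg (α * m * N / 2)]
  set t := D / (2 * (N * m)) with ht_def
  have ht0 : 0 ≤ t := by positivity
  have hE : Real.exp (-t) ≤ 1 - t + t ^ 2 := my_exp_neg_quad ht0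
  refine ⟨t, ht0, ?_⟩
  have hmul : N * m * (Real.exp (-t) - 1) ≤ N * m * (-t + t ^ 2) :=
    mul_le_mul_of_nonneg_left (by linarith) hNm.le
  have key : N * m * t ^ 2 - t * D ≤ -(α / 8) := by
    have h3 : N * m * t ^ 2 - t * D = -(D ^ 2 / (4 * (N * m))) := by
      rw [ht_def]; field_simp; ring
    rw [h3, neg_le_neg_iff]
    rw [le_div_iff₀ (by positivity)]
    nlinarith
  have hring : t * (N * m - D) + N * m * (-t + t ^ 2) = N * m * t ^ 2 - t * D := by ring
  linarith

lemma my_union_toReal {Ω : Type} [MeasurableSpace Ω] (μ : Measure Ω) [IsFiniteMeasure μ]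
    (A B : Set Ω) : (μ (A ∪ B)).toReal ≤ (μ A).toReal + (μ B).toReal := by
  rw [← ENNReal.toReal_add (measure_ne_top μ A) (measure_ne_top μ B)]
  exact ENNReal.toReal_mono (by simp [ENNReal.add_ne_top, measure_ne_top]) (measure_union_le A B)

lemma my_prob_ge {Ω : Type} [MeasurableSpace Ω] (μ : Measure Ω) [IsProbabilityMeasure μ]
    {E B : Set Ω} (hB : MeasurableSet B) (hsub : Bᶜ ⊆ E) {b : ℝ}
    (hb : (μ B).toReal ≤ b) : 1 - b ≤ (μ E).toReal := by
  have h1 : μ Bᶜ ≤ μ E := measure_mono hsub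
  have h2 : (μ Bᶜ).toReal = 1 - (μ B).toReal := by
    rw [measure_compl hB (measure_ne_top μ B), measure_univ,
      ENNReal.toReal_sub_of_le prob_le_one ENNReal.one_ne_top, ENNReal.toReal_one]
  have h3 : (μ Bᶜ).toReal ≤ (μ E).toReal :=
    ENNReal.toReal_mono (measure_ne_top μ E) h1
  linarith

/-- Refined Chernoff bound: for i.i.d. `[0,1]`-valued random variables with mean `m`
and average `X̄`, with probability at least `1 - c₁·exp(-c₂·α)` (absolute constants
`c₁, c₂ > 0`), both `|X̄ - m| < r(α, X̄)` and `r(α, X̄) < 3·r(α, m)` hold, where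
`r(α, x) = α/n + √(α·x/n)`. -/
theorem stmt_5 :
    ∃ c₁ c₂ : ℝ, 0 < c₁ ∧ 0 < c₂ ∧
    ∀ (Ω : Type) (_ : MeasurableSpace Ω) (μ : Measure Ω), IsProbabilityMeasure μ →
    ∀ (n : ℕ) (hn : 0 < n),
    ∀ (X : Fin n → Ω → ℝ),
      (∀ i, Measurable (X i)) →
      iIndepFun X μ →
      (∀ i, Measure.map (X i) μ = Measure.map (X ⟨0, hn⟩) μ) →
      (∀ i, ∀ᵐ ω ∂μ, X i ω ∈ Set.Icc (0 : ℝ) 1) →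
    ∀ (m : ℝ), m = μ[X ⟨0, hn⟩] →
    ∀ α : ℝ, 0 < α →
      (1 - c₁ * Real.exp (-c₂ * α)) ≤
        (μ {ω | |(∑ i, X i ω) / n - m| < α / n + Real.sqrt (α * ((∑ i, X i ω) / n) / n) ∧
                α / n + Real.sqrt (α * ((∑ i, X i ω) / n) / n) <
                  3 * (α / n + Real.sqrt (α * m / n))}).toReal := by
  refine ⟨3, 1/16, by norm_num, by norm_num, ?_⟩
  intro Ω mΩ μ hμ n hn X hmeas hindep hident hbdd m hm α hα
  have hN : (0:ℝ) < (n:ℝ) := by exact_mod_cast hn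
  have hints : ∀ i, ∫ ω, X i ω ∂μ = m := by
    intro i
    have h1 : ∫ ω, X i ω ∂μ = ∫ y, y ∂(Measure.map (X i) μ) :=
      (integral_map (hmeas i).aemeasurable aestronglyMeasurable_id).symm
    rw [h1, hident i, hm]
    exact integral_map (hmeas ⟨0, hn⟩).aemeasurable aestronglyMeasurable_id
  have hm0 : 0 ≤ m := by
    rw [hm]; exact integral_nonneg_of_ae ((hbdd ⟨0, hn⟩).mono fun ω h => h.1)
  have hβ : 0 < α / (n:ℝ) := by positivity
  have e1 : Real.sqrt (α / (n:ℝ) * m) = Real.sqrt (α * m * (n:ℝ)) / (n:ℝ) := by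
    rw [show α / (n:ℝ) * m = α * m * (n:ℝ) / (n:ℝ) ^ 2 by field_simp,
      Real.sqrt_div (by positivity), Real.sqrt_sq hN.le]
  have e2 : Real.sqrt (α / (n:ℝ) * m / 2) = Real.sqrt (α * m * (n:ℝ) / 2) / (n:ℝ) := by
    rw [show α / (n:ℝ) * m / 2 = α * m * (n:ℝ) / 2 / (n:ℝ) ^ 2 by field_simp,
      Real.sqrt_div (by positivity), Real.sqrt_sq hN.le]
  have hSmeas : Measurable (fun ω => ∑ i, X i ω) :=
    Finset.measurable_sum Finset.univ (fun i _ => hmeas i)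
  set T : Set Ω := {ω | ¬ ∀ i, X i ω ∈ Set.Icc (0:ℝ) 1} with hT_def
  have hTmeas : MeasurableSet T := by
    have hT_eq : T = (⋂ i, X i ⁻¹' Set.Icc (0:ℝ) 1)ᶜ := by
      ext ω; simp [hT_def]
    rw [hT_eq]
    exact (MeasurableSet.iInter fun i => (hmeas i) measurableSet_Icc).compl
  have hT0 : μ T = 0 := by
    have haeall : ∀ᵐ ω ∂μ, ∀ i, X i ω ∈ Set.Icc (0:ℝ) 1 := ae_all_iff.2 hbdd
    exact haeall
  set Aup : Set Ω :=
    {ω | (n:ℝ) * m + α + Real.sqrt (α * m * (n:ℝ)) ≤ ∑ i, X i ω} with hAup_def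
  set A₁ : Set Ω := {ω | ∑ i, X i ω ≤ (n:ℝ) * m / 2} with hA₁_def
  set A₂ : Set Ω :=
    {ω | ∑ i, X i ω ≤ (n:ℝ) * m - (α + Real.sqrt (α * m * (n:ℝ) / 2))} with hA₂_def
  have hAupmeas : MeasurableSet Aup := measurableSet_le measurable_const hSmeas
  have hA₁meas : MeasurableSet A₁ := measurableSet_le hSmeas measurable_const
  have hA₂meas : MeasurableSet A₂ := measurableSet_le hSmeas measurable_const
  -- tail bounds
  have hup : (μ Aup).toReal ≤ Real.exp (-(1/16) * α) := by
    obtain ⟨t, ht0, hexp⟩ := my_up_exp hN hm0 hα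
    refine (my_chernoff_upper hmeas hindep hbdd hints ht0 _).trans ?_
    rw [Real.exp_le_exp]; linarith
  -- key inclusion pieces, given ω in none of the bad events we need
  have hdet : ∀ ω : Ω, (∀ i, X i ω ∈ Set.Icc (0:ℝ) 1) →
      (∑ i, X i ω) < (n:ℝ) * m + α + Real.sqrt (α * m * (n:ℝ)) →
      ((m < α / (n:ℝ)) ∨
        ((n:ℝ) * m / 2 < ∑ i, X i ω ∧
          (n:ℝ) * m - (α + Real.sqrt (α * m * (n:ℝ) / 2)) < ∑ i, X i ω)) →
      ω ∈ {ω | |(∑ i, X i ω) / (n:ℝ) - m| <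
              α / (n:ℝ) + Real.sqrt (α * ((∑ i, X i ω) / (n:ℝ)) / (n:ℝ)) ∧
            α / (n:ℝ) + Real.sqrt (α * ((∑ i, X i ω) / (n:ℝ)) / (n:ℝ)) <
              3 * (α / (n:ℝ) + Real.sqrt (α * m / (n:ℝ)))} := by
    intro ω hIcc hup' hlow'
    set x : ℝ := (∑ i, X i ω) / (n:ℝ) with hx_def
    have hx0 : 0 ≤ x := by
      rw [hx_def]
      have : 0 ≤ ∑ i, X i ω := Finset.sum_nonneg fun i _ => (hIcc i).1
      positivity
    have hxN : x * (n:ℝ) = ∑ i, X i ω := by rw [hx_def]; field_simp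
    have h1 : x - m < α / (n:ℝ) + Real.sqrt (α / (n:ℝ) * m) := by
      rw [e1, ← add_div, lt_div_iff₀ hN, sub_mul, hxN]
      linarith
    have h2 : m < α / (n:ℝ) ∨
        (m / 2 < x ∧ m - x < α / (n:ℝ) + Real.sqrt (α / (n:ℝ) * m / 2)) := by
      rcases hlow' with h | ⟨ha, hb⟩
      · exact Or.inl h
      · refine Or.inr ⟨?_, ?_⟩
        · rw [hx_def, lt_div_iff₀ hN]; linarith
        · rw [e2, ← add_div, lt_div_iff₀ hN, sub_mul, hxN]
          linarith
    have hd := my_det hβ hm0 hx0 h1 h2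
    have g1 : α * x / (n:ℝ) = α / (n:ℝ) * x := by ring
    have g2 : α * m / (n:ℝ) = α / (n:ℝ) * m := by ring
    simp only [Set.mem_setOf_eq, ← hx_def, g1, g2]
    exact hd
  rcases le_or_gt α ((n:ℝ) * m) with hc | hc
  · -- α ≤ n m : use all bad events
    have hlow1 : (μ A₁).toReal ≤ Real.exp (-(1/16) * α) := by
      obtain ⟨t, ht0, hexp⟩ := my_low1_exp hm0 hα hc
      refine (my_chernoff_lower hmeas hindep hbdd hints ht0 _).trans ?_
      rw [Real.exp_le_exp]; linarith
    have hlow2 : (μ A₂).toReal ≤ Real.exp (-(1/16) * α) := by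
      obtain ⟨t, ht0, hexp⟩ := my_low2_exp hm0 hα hc
      refine (my_chernoff_lower hmeas hindep hbdd hints ht0 _).trans ?_
      rw [Real.exp_le_exp]; linarith
    refine my_prob_ge μ (hAupmeas.union (hA₁meas.union (hA₂meas.union hTmeas))) ?_ ?_
    · intro ω hω
      simp only [Set.mem_compl_iff, Set.mem_union, not_or, hAup_def, hA₁_def, hA₂_def,
        hT_def, Set.mem_setOf_eq, not_le, not_not] at hω
      obtain ⟨hup2, h₁, h₂, hT'⟩ := hω
      exact hdet ω hT' hup2 (Or.inr ⟨h₁, h₂⟩)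
    · have u1 := my_union_toReal μ A₂ T
      have u2 := my_union_toReal μ A₁ (A₂ ∪ T)
      have u3 := my_union_toReal μ Aup (A₁ ∪ (A₂ ∪ T))
      have : (μ T).toReal = 0 := by rw [hT0]; simp
      linarith
  · -- n m < α : only upper tail needed
    have hm_lt : m < α / (n:ℝ) := by rw [lt_div_iff₀ hN]; linarith
    refine my_prob_ge μ (hAupmeas.union hTmeas) ?_ ?_
    · intro ω hω
      simp only [Set.mem_compl_iff, Set.mem_union, not_or, hAup_def, hT_def,
        Set.mem_setOf_eq, not_le, not_not] at hω
      obtain ⟨hup2, hT'⟩ := hω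
      exact hdet ω hT' hup2 (Or.inl hm_lt)
    · have u1 := my_union_toReal μ Aup T
      have h0 : (μ T).toReal = 0 := by rw [hT0]; simp
      have hE : 0 < Real.exp (-(1/16) * α) := Real.exp_pos _
      linarith
end

section
/- Regret summation bound: Let d ≥ 0, C > 0, t ≥ 1, and K ≥ 1. Suppose S is a finite set with a function Δ : S → (0,1] and n : S → ℕ such that Σ_{v∈S} n(v) ≤ t, n(v) ≤ K/Δ(v)² for all v, and for every i ≥ 0, |{v ∈ S : 2^i ≤ 1/Δ(v) < 2^{i+1}}| ≤ C·2^{id}. Then Σ_{v∈S} Δ(v)·n(v) ≤ O(t^γ · (C·K)^{1−γ}), where γ = (d+1)/(d+2) and the constant in O(·) is absolute (may depend on d). -/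
open scoped Classical

private lemma geom_le_aux (r : ℝ) (hr : 2 ≤ r) (I : ℕ) :
    ∑ i ∈ Finset.range I, r ^ i ≤ r ^ I := by
  induction I with
  | zero => simp
  | succ I ih =>
    rw [Finset.sum_range_succ, pow_succ]
    have h0 : (0:ℝ) ≤ r ^ I := pow_nonneg (by linarith) I
    nlinarith

/-- Regret summation bound: if `∑ n(v) ≤ t`, `n(v) ≤ K/Δ(v)²`, and each dyadic class
`{v | 2^i ≤ 1/Δ(v) < 2^(i+1)}` has at most `C·2^(i·d)` elements, then
`∑ Δ(v)·n(v) ≤ A · t^γ · (C·K)^(1-γ)` with `γ = (d+1)/(d+2)` and `A` an absolute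
constant (depending only on `d`). -/
theorem stmt_9 (d : ℝ) (hd : 0 ≤ d) :
    ∃ A : ℝ, 0 < A ∧
    ∀ (V : Type) (S : Finset V) (Δ : V → ℝ) (n : V → ℕ) (C K t : ℝ),
      0 < C → 1 ≤ K → 1 ≤ t →
      (∀ v ∈ S, 0 < Δ v ∧ Δ v ≤ 1) →
      (∑ v ∈ S, (n v : ℝ)) ≤ t →
      (∀ v ∈ S, (n v : ℝ) ≤ K / (Δ v) ^ 2) →
      (∀ i : ℕ, ((S.filter (fun v => (2 : ℝ) ^ i ≤ 1 / Δ v ∧ 1 / Δ v < 2 ^ (i + 1))).card : ℝ)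
        ≤ C * 2 ^ ((i : ℝ) * d)) →
      (∑ v ∈ S, Δ v * n v) ≤ A * (t ^ ((d + 1) / (d + 2)) * (C * K) ^ (1 - (d + 1) / (d + 2))) := by
  refine ⟨1 + 2 ^ (d + 2 : ℝ), by positivity, ?_⟩
  intro V S Δ n C K t hC hK ht hΔ hsum hn hcard
  set γ : ℝ := (d + 1) / (d + 2) with hγdef
  have hd2 : (0:ℝ) < d + 2 := by linarith
  have hγ1 : 1 - γ = 1 / (d + 2) := by rw [hγdef]; field_simp; ring
  have hγ0 : 0 ≤ γ := by positivity
  have hγle : γ ≤ 1 := by rw [hγdef, div_le_one hd2]; linarith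
  have hK0 : (0:ℝ) < K := lt_of_lt_of_le one_pos hK
  have hx : (0:ℝ) < C * K := by positivity
  have ht0 : (0:ℝ) < t := lt_of_lt_of_le one_pos ht
  set T : ℝ := t ^ γ * (C * K) ^ (1 - γ) with hTdef
  have hT0 : 0 ≤ T := by positivity
  have hA1 : (1:ℝ) ≤ 1 + 2 ^ (d + 2 : ℝ) := by
    have : (0:ℝ) < 2 ^ (d + 2 : ℝ) := by positivity
    linarith
  by_cases hcase : t ≤ C * K
  · -- trivial case: ∑ Δ n ≤ ∑ n ≤ t ≤ T
    have h1 : ∑ v ∈ S, Δ v * n v ≤ ∑ v ∈ S, (n v : ℝ) := by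
      apply Finset.sum_le_sum
      intro v hv
      obtain ⟨h0, h1⟩ := hΔ v hv
      nlinarith [(Nat.cast_nonneg (n v) : (0:ℝ) ≤ (n v : ℝ))]
    have h2 : t ≤ T := by
      have e : t = t ^ γ * t ^ (1 - γ) := by
        rw [← Real.rpow_add ht0, show γ + (1 - γ) = 1 by ring, Real.rpow_one]
      have hcc : t ^ (1 - γ) ≤ (C * K) ^ (1 - γ) :=
        Real.rpow_le_rpow ht0.le hcase (by linarith)
      calc t = t ^ γ * t ^ (1 - γ) := e
        _ ≤ t ^ γ * (C * K) ^ (1 - γ) :=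
            mul_le_mul_of_nonneg_left hcc (Real.rpow_nonneg ht0.le _)
        _ = T := hTdef.symm
    have h3 : T ≤ (1 + 2 ^ (d + 2 : ℝ)) * T := by nlinarith
    calc ∑ v ∈ S, Δ v * n v ≤ t := le_trans h1 hsum
      _ ≤ T := h2
      _ ≤ _ := h3
  · push_neg at hcase
    -- main case: C*K < t
    set ρ : ℝ := (C * K / t) ^ ((1:ℝ) / (d + 2)) with hρdef
    have hxt : (0:ℝ) < C * K / t := by positivity
    have hρ0 : 0 < ρ := Real.rpow_pos_of_pos hxt _
    have hρ1 : ρ ≤ 1 := by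
      apply le_of_lt
      apply Real.rpow_lt_one hxt.le ((div_lt_one ht0).2 hcase)
      positivity
    -- key algebraic identities
    have hρt : ρ * t = T := by
      have ht1γ : (0:ℝ) < t ^ (1 - γ) := Real.rpow_pos_of_pos ht0 _
      have htγ : t ^ γ * t ^ (1 - γ) = t := by
        rw [← Real.rpow_add ht0, show γ + (1 - γ) = 1 by ring, Real.rpow_one]
      have h : t / t ^ (1 - γ) = t ^ γ := by
        rw [eq_comm, eq_div_iff ht1γ.ne', htγ]
      rw [hρdef, ← hγ1, Real.div_rpow hx.le ht0.le, hTdef,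
        div_mul_eq_mul_div, mul_div_assoc, h, mul_comm]
    have hρpow : C * K / ρ ^ (d + 1 : ℝ) = T := by
      have e1 : ρ ^ (d + 1 : ℝ) = (C * K / t) ^ γ := by
        rw [hρdef, ← Real.rpow_mul hxt.le]
        congr 1
        rw [hγdef]; ring
      have e2 : (C * K) ^ (1 - γ) = C * K / (C * K) ^ γ := by
        rw [show (1:ℝ) - γ = 1 - γ by ring, Real.rpow_sub hx, Real.rpow_one]
      have hckγ : (0:ℝ) < (C * K) ^ γ := Real.rpow_pos_of_pos hx _
      have htγ : (0:ℝ) < t ^ γ := Real.rpow_pos_of_pos ht0 _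
      rw [e1, Real.div_rpow hx.le ht0.le, hTdef, e2]
      field_simp
    -- split the sum
    have hsplit : ∑ v ∈ S, Δ v * n v
        = ∑ v ∈ S.filter (fun v => Δ v ≤ ρ), Δ v * n v
          + ∑ v ∈ S.filter (fun v => ¬ Δ v ≤ ρ), Δ v * n v :=
      (Finset.sum_filter_add_sum_filter_not S _ _).symm
    -- small-gap part
    have hsmall : ∑ v ∈ S.filter (fun v => Δ v ≤ ρ), Δ v * n v ≤ ρ * t := by
      have h1 : ∑ v ∈ S.filter (fun v => Δ v ≤ ρ), Δ v * n v
          ≤ ∑ v ∈ S.filter (fun v => Δ v ≤ ρ), ρ * n v := by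
        apply Finset.sum_le_sum
        intro v hv
        rw [Finset.mem_filter] at hv
        exact mul_le_mul_of_nonneg_right hv.2 (Nat.cast_nonneg _)
      have h2 : ∑ v ∈ S.filter (fun v => Δ v ≤ ρ), ρ * (n v : ℝ)
          = ρ * ∑ v ∈ S.filter (fun v => Δ v ≤ ρ), (n v : ℝ) := by
        rw [Finset.mul_sum]
      have h3 : ∑ v ∈ S.filter (fun v => Δ v ≤ ρ), (n v : ℝ) ≤ ∑ v ∈ S, (n v : ℝ) :=
        Finset.sum_le_sum_of_subset_of_nonneg (Finset.filter_subset _ _)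
          (fun v _ _ => Nat.cast_nonneg _)
      calc ∑ v ∈ S.filter (fun v => Δ v ≤ ρ), Δ v * n v
          ≤ ρ * ∑ v ∈ S.filter (fun v => Δ v ≤ ρ), (n v : ℝ) := by rw [← h2]; exact h1
        _ ≤ ρ * t := by
            apply mul_le_mul_of_nonneg_left _ hρ0.le
            exact le_trans h3 hsum
    -- large-gap part
    set I : ℕ := ⌈Real.logb 2 (1 / ρ)⌉₊ with hIdef
    have hρinv1 : (1:ℝ) ≤ 1 / ρ := one_le_one_div hρ0 hρ1
    have hlogb0 : 0 ≤ Real.logb 2 (1 / ρ) :=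
      Real.logb_nonneg one_lt_two hρinv1
    have hI1 : 1 / ρ ≤ (2:ℝ) ^ I := by
      have h := Nat.le_ceil (Real.logb 2 (1 / ρ))
      calc 1 / ρ = (2:ℝ) ^ Real.logb 2 (1 / ρ) :=
            (Real.rpow_logb two_pos (by norm_num) (by positivity)).symm
        _ ≤ (2:ℝ) ^ (I : ℝ) :=
            Real.rpow_le_rpow_of_exponent_le one_le_two h
        _ = (2:ℝ) ^ I := by rw [Real.rpow_natCast]
    have hI2 : ((2:ℝ) ^ I) ≤ 2 / ρ := by
      have h : (I : ℝ) < Real.logb 2 (1 / ρ) + 1 := Nat.ceil_lt_add_one hlogb0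
      have : (2:ℝ) ^ (I : ℝ) ≤ (2:ℝ) ^ (Real.logb 2 (1 / ρ) + 1) :=
        Real.rpow_le_rpow_of_exponent_le one_le_two h.le
      calc ((2:ℝ) ^ I) = (2:ℝ) ^ (I : ℝ) := by rw [Real.rpow_natCast]
        _ ≤ (2:ℝ) ^ (Real.logb 2 (1 / ρ) + 1) := this
        _ = (1 / ρ) * 2 := by
            rw [Real.rpow_add two_pos, Real.rpow_logb two_pos (by norm_num) (by positivity),
              Real.rpow_one]
        _ = 2 / ρ := by ring
    -- the dyadic classes
    set cls : ℕ → Finset V :=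
      fun i => S.filter (fun v => (2 : ℝ) ^ i ≤ 1 / Δ v ∧ 1 / Δ v < 2 ^ (i + 1)) with hclsdef
    have hcover : S.filter (fun v => ¬ Δ v ≤ ρ) ⊆ (Finset.range I).biUnion cls := by
      intro v hv
      rw [Finset.mem_filter] at hv
      obtain ⟨hvS, hvρ⟩ := hv
      push_neg at hvρ
      obtain ⟨hΔ0, hΔ1⟩ := hΔ v hvS
      have hinv1 : (1:ℝ) ≤ 1 / Δ v := one_le_one_div hΔ0 hΔ1
      have hinvρ : 1 / Δ v < 1 / ρ := by
        apply one_div_lt_one_div_of_lt hρ0 hvρ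
      set m : ℕ := ⌊1 / Δ v⌋₊ with hmdef
      have hm1 : 1 ≤ m := Nat.le_floor (by exact_mod_cast hinv1)
      have hm0 : m ≠ 0 := by omega
      set i : ℕ := Nat.log 2 m with hidef
      have h2i : (2:ℕ) ^ i ≤ m := Nat.pow_log_le_self 2 hm0
      have h2i' : m < 2 ^ (i + 1) := Nat.lt_pow_succ_log_self one_lt_two m
      have hfl : (m : ℝ) ≤ 1 / Δ v := Nat.floor_le (by positivity)
      have hfu : 1 / Δ v < (m : ℝ) + 1 := Nat.lt_floor_add_one _
      have hlow : (2:ℝ) ^ i ≤ 1 / Δ v := by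
        calc (2:ℝ) ^ i = ((2 ^ i : ℕ) : ℝ) := by push_cast; ring
          _ ≤ (m : ℝ) := by exact_mod_cast h2i
          _ ≤ 1 / Δ v := hfl
      have hhigh : 1 / Δ v < (2:ℝ) ^ (i + 1) := by
        have : (m : ℝ) + 1 ≤ (2:ℝ) ^ (i + 1) := by
          have : m + 1 ≤ 2 ^ (i + 1) := h2i'
          exact_mod_cast this
        linarith
      have hiI : i < I := by
        by_contra hcon
        push_neg at hcon
        have : (2:ℝ) ^ I ≤ (2:ℝ) ^ i := pow_le_pow_right₀ one_le_two hcon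
        have h1 : (2:ℝ) ^ i ≤ 1 / Δ v := hlow
        have h2 : 1 / Δ v < 1 / ρ := hinvρ
        linarith [hI1]
      rw [Finset.mem_biUnion]
      exact ⟨i, Finset.mem_range.2 hiI, by
        rw [hclsdef, Finset.mem_filter]; exact ⟨hvS, hlow, hhigh⟩⟩
    have hdisj : ∀ i ∈ Finset.range I, ∀ j ∈ Finset.range I, i ≠ j →
        Disjoint (cls i) (cls j) := by
      intro i _ j _ hij
      rw [Finset.disjoint_left]
      intro v hvi hvj
      rw [hclsdef, Finset.mem_filter] at hvi hvj
      obtain ⟨_, hi1, hi2⟩ := hvi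
      obtain ⟨_, hj1, hj2⟩ := hvj
      rcases lt_or_gt_of_ne hij with h | h
      · have : (2:ℝ) ^ (i + 1) ≤ (2:ℝ) ^ j := pow_le_pow_right₀ one_le_two h
        linarith
      · have : (2:ℝ) ^ (j + 1) ≤ (2:ℝ) ^ i := pow_le_pow_right₀ one_le_two h
        linarith
    have hlarge : ∑ v ∈ S.filter (fun v => ¬ Δ v ≤ ρ), Δ v * n v
        ≤ 2 ^ (d + 2 : ℝ) * (C * K / ρ ^ (d + 1 : ℝ)) := by
      have hterm : ∀ v ∈ S, Δ v * n v ≤ K * (1 / Δ v) := by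
        intro v hv
        obtain ⟨h0, _⟩ := hΔ v hv
        have := hn v hv
        calc Δ v * n v ≤ Δ v * (K / Δ v ^ 2) :=
              mul_le_mul_of_nonneg_left this h0.le
          _ = K * (1 / Δ v) := by field_simp
      have hnn : ∀ v ∈ S, 0 ≤ K * (1 / Δ v) := by
        intro v hv
        obtain ⟨h0, _⟩ := hΔ v hv
        positivity
      have step1 : ∑ v ∈ S.filter (fun v => ¬ Δ v ≤ ρ), Δ v * n v
          ≤ ∑ v ∈ S.filter (fun v => ¬ Δ v ≤ ρ), K * (1 / Δ v) := by
        apply Finset.sum_le_sum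
        intro v hv
        exact hterm v (Finset.mem_filter.1 hv).1
      have step2 : ∑ v ∈ S.filter (fun v => ¬ Δ v ≤ ρ), K * (1 / Δ v)
          ≤ ∑ v ∈ (Finset.range I).biUnion cls, K * (1 / Δ v) := by
        apply Finset.sum_le_sum_of_subset_of_nonneg hcover
        intro v hv _
        obtain ⟨i, _, hvc⟩ := Finset.mem_biUnion.1 hv
        simp only [hclsdef, Finset.mem_filter] at hvc
        exact hnn v hvc.1
      have step3 : ∑ v ∈ (Finset.range I).biUnion cls, K * (1 / Δ v)
          = ∑ i ∈ Finset.range I, ∑ v ∈ cls i, K * (1 / Δ v) :=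
        Finset.sum_biUnion hdisj
      have step4 : ∀ i, ∑ v ∈ cls i, K * (1 / Δ v)
          ≤ C * 2 ^ ((i : ℝ) * d) * (K * 2 ^ (i + 1)) := by
        intro i
        have hb : ∀ v ∈ cls i, K * (1 / Δ v) ≤ K * 2 ^ (i + 1) := by
          intro v hv
          rw [hclsdef, Finset.mem_filter] at hv
          exact mul_le_mul_of_nonneg_left hv.2.2.le hK0.le
        calc ∑ v ∈ cls i, K * (1 / Δ v)
            ≤ ∑ _v ∈ cls i, K * (2:ℝ) ^ (i + 1) := Finset.sum_le_sum hb
          _ = ((cls i).card : ℝ) * (K * 2 ^ (i + 1)) := by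
              rw [Finset.sum_const, nsmul_eq_mul]
          _ ≤ C * 2 ^ ((i : ℝ) * d) * (K * 2 ^ (i + 1)) := by
              apply mul_le_mul_of_nonneg_right (hcard i)
              positivity
      -- sum the geometric series
      set r : ℝ := (2:ℝ) ^ (d + 1 : ℝ) with hrdef
      have hr2 : (2:ℝ) ≤ r := by
        calc (2:ℝ) = (2:ℝ) ^ (1:ℝ) := (Real.rpow_one 2).symm
          _ ≤ r := Real.rpow_le_rpow_of_exponent_le one_le_two (by linarith)
      have hterm_eq : ∀ i : ℕ, C * 2 ^ ((i : ℝ) * d) * (K * 2 ^ (i + 1))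
          = 2 * C * K * r ^ i := by
        intro i
        have e1 : ((2:ℝ) ^ (i + 1) : ℝ) = (2:ℝ) ^ ((i : ℝ) + 1) := by
          rw [← Real.rpow_natCast (2:ℝ) (i + 1)]
          push_cast
          ring_nf
        have e2 : r ^ i = (2:ℝ) ^ ((d + 1) * (i : ℝ)) := by
          rw [hrdef, ← Real.rpow_natCast ((2:ℝ) ^ (d + 1 : ℝ)) i,
            ← Real.rpow_mul (by norm_num : (0:ℝ) ≤ 2)]
        have e3 : (2:ℝ) ^ ((i:ℝ) * d) * (2:ℝ) ^ ((i:ℝ) + 1)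
            = 2 * (2:ℝ) ^ ((d + 1) * (i:ℝ)) := by
          rw [← Real.rpow_add two_pos,
            show (i:ℝ) * d + ((i:ℝ) + 1) = (d + 1) * (i:ℝ) + 1 by ring,
            Real.rpow_add two_pos, Real.rpow_one]
          ring
        rw [e1, e2]
        linear_combination C * K * e3
      have hgeom : ∑ i ∈ Finset.range I, (2 * C * K * r ^ i)
          ≤ 2 * C * K * r ^ I := by
        rw [← Finset.mul_sum]
        apply mul_le_mul_of_nonneg_left (geom_le_aux r hr2 I) (by positivity)
      have hrI : r ^ I ≤ (2 / ρ) ^ (d + 1 : ℝ) := by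
        have e : r ^ I = ((2:ℝ) ^ I) ^ (d + 1 : ℝ) := by
          rw [hrdef, ← Real.rpow_natCast ((2:ℝ) ^ (d + 1 : ℝ)) I,
            ← Real.rpow_mul (by norm_num : (0:ℝ) ≤ 2),
            ← Real.rpow_natCast (2:ℝ) I,
            ← Real.rpow_mul (by norm_num : (0:ℝ) ≤ 2)]
          ring_nf
        rw [e]
        exact Real.rpow_le_rpow (by positivity) hI2 (by linarith)
      have hfinal : (2:ℝ) * C * K * (2 / ρ) ^ (d + 1 : ℝ)
          = 2 ^ (d + 2 : ℝ) * (C * K / ρ ^ (d + 1 : ℝ)) := by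
        rw [Real.div_rpow (by norm_num : (0:ℝ) ≤ 2) hρ0.le]
        have e : (2:ℝ) ^ (d + 2 : ℝ) = 2 * (2:ℝ) ^ (d + 1 : ℝ) := by
          rw [show (d + 2 : ℝ) = (d + 1) + 1 by ring, Real.rpow_add two_pos, Real.rpow_one]
          ring
        rw [e]
        have hρp : (0:ℝ) < ρ ^ (d + 1 : ℝ) := Real.rpow_pos_of_pos hρ0 _
        field_simp
      calc ∑ v ∈ S.filter (fun v => ¬ Δ v ≤ ρ), Δ v * n v
          ≤ ∑ i ∈ Finset.range I, ∑ v ∈ cls i, K * (1 / Δ v) := by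
            rw [← step3]; exact le_trans step1 step2
        _ ≤ ∑ i ∈ Finset.range I, (2 * C * K * r ^ i) := by
            apply Finset.sum_le_sum
            intro i _
            rw [← hterm_eq i]
            exact step4 i
        _ ≤ 2 * C * K * r ^ I := hgeom
        _ ≤ 2 * C * K * (2 / ρ) ^ (d + 1 : ℝ) := by
            apply mul_le_mul_of_nonneg_left hrI (by positivity)
        _ = 2 ^ (d + 2 : ℝ) * (C * K / ρ ^ (d + 1 : ℝ)) := hfinal
    -- combine
    calc ∑ v ∈ S, Δ v * n v
        = ∑ v ∈ S.filter (fun v => Δ v ≤ ρ), Δ v * n v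
          + ∑ v ∈ S.filter (fun v => ¬ Δ v ≤ ρ), Δ v * n v := hsplit
      _ ≤ ρ * t + 2 ^ (d + 2 : ℝ) * (C * K / ρ ^ (d + 1 : ℝ)) := add_le_add hsmall hlarge
      _ = T + 2 ^ (d + 2 : ℝ) * T := by rw [hρt, hρpow]
      _ = (1 + 2 ^ (d + 2 : ℝ)) * T := by ring
end

section
/- If the max-min-covering dimension of a metric space X is strictly less than d, and {S_λ} is a decreasing transfinite sequence of closed subsets with S_0 = X, S_{λ+1} = FP(S_λ, d) (the set of d-fat points of S_λ), and S_λ = ⋂_{ν<λ} S_ν at limit ordinals λ, then there is no nonempty S_λ with FP(S_λ, d) = S_λ; equivalently, the sequence strictly decreases until it reaches the empty set. -/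
open scoped Classical

variable {X : Type*} [MetricSpace X]

/-- Covering dimension of a subset `Y` of a metric space: the infimum of all `d`
such that for some `c`, `Y` can be covered by `c·r^(-d)` sets of diameter ≤ `r`
for all `r > 0`. -/
noncomputable def covDim (Y : Set X) : ℝ :=
  sInf {d : ℝ | ∃ c : ℝ, 0 < c ∧ ∀ r > (0 : ℝ), ∃ 𝒞 : Finset (Set X),
    (𝒞.card : ℝ) ≤ c * r ^ (-d) ∧ Y ⊆ ⋃₀ ↑𝒞 ∧ ∀ s ∈ 𝒞, Metric.diam s ≤ r}

/-- A subset `U ⊆ Y` which is relatively open in `Y`. -/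
def RelOpenIn (U Y : Set X) : Prop := ∃ V : Set X, IsOpen V ∧ U = V ∩ Y

/-- The set of `d`-thin points of `Y`: the union of all relatively open `U ⊆ Y`
with `COV(U) < d`. -/
def thinPoints (Y : Set X) (d : ℝ) : Set X :=
  ⋃₀ {U : Set X | RelOpenIn U Y ∧ covDim U < d}

/-- The set of `d`-fat points of `Y`. -/
def fatPoints (Y : Set X) (d : ℝ) : Set X := Y \ thinPoints Y d

/-- `MinCOV(Y)`: infimum of `COV(U)` over nonempty relatively open `U ⊆ Y`. -/
noncomputable def minCov (Y : Set X) : ℝ :=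
  sInf (covDim '' {U : Set X | RelOpenIn U Y ∧ U.Nonempty})

/-- `MaxMinCOV(X)`: supremum of `MinCOV(Y)` over all subsets `Y ⊆ X`. -/
noncomputable def maxMinCov (X : Type*) [MetricSpace X] : ℝ :=
  sSup (Set.range (minCov (X := X)))

/-- Elements of the defining set of `covDim` are nonnegative when `Y` is nonempty. -/
lemma covSet_nonneg {Y : Set X} (hY : Y.Nonempty) {e : ℝ}
    (he : ∃ c : ℝ, 0 < c ∧ ∀ r > (0 : ℝ), ∃ 𝒞 : Finset (Set X),
      (𝒞.card : ℝ) ≤ c * r ^ (-e) ∧ Y ⊆ ⋃₀ ↑𝒞 ∧ ∀ s ∈ 𝒞, Metric.diam s ≤ r) :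
    0 ≤ e := by
  by_contra hneg
  push_neg at hneg
  obtain ⟨c, hc, hcov⟩ := he
  set t : ℝ := -e with ht
  have htpos : 0 < t := by simp [ht]; linarith
  set b : ℝ := (1 / (2 * c)) ^ (1 / t) with hb
  have hbpos : 0 < b := Real.rpow_pos_of_pos (by positivity) _
  set r : ℝ := min 1 b with hr
  have hrpos : 0 < r := lt_min one_pos hbpos
  obtain ⟨𝒞, hcard, hYsub, _⟩ := hcov r hrpos
  have hrt : r ^ t ≤ 1 / (2 * c) := by
    calc r ^ t ≤ b ^ t := Real.rpow_le_rpow (le_of_lt hrpos) (min_le_right _ _) htpos.le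
    _ = (1 / (2 * c)) ^ ((1 / t) * t) := by rw [hb, ← Real.rpow_mul (by positivity)]
    _ = 1 / (2 * c) := by rw [one_div_mul_cancel htpos.ne', Real.rpow_one]
  have h1 : c * r ^ t ≤ 1 / 2 := by
    have := mul_le_mul_of_nonneg_left hrt hc.le
    calc c * r ^ t ≤ c * (1 / (2 * c)) := this
    _ = 1 / 2 := by field_simp
  have hlt : (𝒞.card : ℝ) < 1 := by
    have : (𝒞.card : ℝ) ≤ c * r ^ t := by rwa [ht] at hcard
    linarith
  have hcard0 : 𝒞.card = 0 := by exact_mod_cast Nat.lt_one_iff.mp (by exact_mod_cast hlt)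
  have : 𝒞 = ∅ := Finset.card_eq_zero.mp hcard0
  subst this
  obtain ⟨y, hy⟩ := hY
  have := hYsub hy
  simp at this

lemma covDim_nonneg {Y : Set X} (hY : Y.Nonempty) : 0 ≤ covDim Y :=
  Real.sInf_nonneg fun _ he => covSet_nonneg hY he

lemma minCov_nonneg (Y : Set X) : 0 ≤ minCov Y := by
  apply Real.sInf_nonneg
  rintro x ⟨U, ⟨-, hUne⟩, rfl⟩
  exact covDim_nonneg hUne

/-- self is relatively open in itself -/
lemma relOpenIn_self (Y : Set X) : RelOpenIn Y Y :=
  ⟨Set.univ, isOpen_univ, (Set.univ_inter Y).symm⟩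


/-- If `MaxMinCOV(X) < d` and `(S_λ)` is the transfinite fat-point sequence
(`S_0 = X`, `S_{λ+1} = FP(S_λ, d)`, intersections at limits), then there is no
nonempty `S_λ` with `FP(S_λ, d) = S_λ`. -/
theorem stmt_10 {X : Type*} [MetricSpace X] (d : ℝ) (hd : maxMinCov X < d)
    (S : Ordinal → Set X)
    (h0 : S 0 = Set.univ)
    (hsucc : ∀ lam : Ordinal, S (lam + 1) = fatPoints (S lam) d)
    (hlim : ∀ lam : Ordinal, Order.IsSuccLimit lam → S lam = ⋂ ν ∈ Set.Iio lam, S ν) :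
    ¬ ∃ lam : Ordinal, (S lam).Nonempty ∧ fatPoints (S lam) d = S lam := by
  rintro ⟨lam, hne, hfix⟩
  set Y := S lam with hY
  -- d is positive
  have hd0 : 0 < d := lt_of_le_of_lt (Real.sSup_nonneg (by rintro x ⟨Z, rfl⟩; exact minCov_nonneg Z)) hd
  -- Step A: every nonempty relatively open subset of Y has covDim ≥ d
  have hA : ∀ U : Set X, RelOpenIn U Y → U.Nonempty → d ≤ covDim U := by
    intro U hU hUne
    by_contra h
    push_neg at h
    obtain ⟨x, hx⟩ := hUne
    have hxY : x ∈ Y := by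
      obtain ⟨V, -, rfl⟩ := hU
      exact hx.2
    have hxthin : x ∈ thinPoints Y d := ⟨U, ⟨hU, h⟩, hx⟩
    have : x ∈ fatPoints Y d := hfix.symm ▸ hxY
    exact this.2 hxthin
  -- Step B: minCov Y ≥ d
  have hB : d ≤ minCov Y := by
    refine le_csInf ⟨covDim Y, Set.mem_image_of_mem covDim ⟨relOpenIn_self Y, hne⟩⟩ ?_
    rintro t ⟨U, ⟨hU, hUne⟩, rfl⟩
    exact hA U hU hUne
  -- case split on whether the defining set of covDim univ is nonempty
  by_cases hDuniv : ({e : ℝ | ∃ c : ℝ, 0 < c ∧ ∀ r > (0 : ℝ), ∃ 𝒞 : Finset (Set X),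
      (𝒞.card : ℝ) ≤ c * r ^ (-e) ∧ (Set.univ : Set X) ⊆ ⋃₀ ↑𝒞 ∧
      ∀ s ∈ 𝒞, Metric.diam s ≤ r} : Set ℝ).Nonempty
  · -- bounded case: range of minCov is bounded above
    have hbdd : BddAbove (Set.range (minCov (X := X))) := by
      refine ⟨max 0 (covDim (Set.univ : Set X)), ?_⟩
      rintro x ⟨Z, rfl⟩
      by_cases hne' : {U : Set X | RelOpenIn U Z ∧ U.Nonempty}.Nonempty
      · obtain ⟨U, hU, hUne⟩ := hne'
        have h1 : minCov Z ≤ covDim U := by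
          apply csInf_le
          · exact ⟨0, by rintro t ⟨W, ⟨-, hWne⟩, rfl⟩; exact covDim_nonneg hWne⟩
          · exact Set.mem_image_of_mem _ ⟨hU, hUne⟩
        have h2 : covDim U ≤ covDim (Set.univ : Set X) := by
          apply csInf_le_csInf
          · exact ⟨0, fun e he => covSet_nonneg hUne he⟩
          · exact hDuniv
          · rintro e ⟨c, hc, hcov⟩
            exact ⟨c, hc, fun r hr => by
              obtain ⟨𝒞, h1, h2, h3⟩ := hcov r hr
              exact ⟨𝒞, h1, (Set.subset_univ U).trans h2, h3⟩⟩
        exact le_trans h1 (h2.trans (le_max_right _ _))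
      · have : covDim '' {U : Set X | RelOpenIn U Z ∧ U.Nonempty} = ∅ := by
          rw [Set.image_eq_empty]
          exact Set.not_nonempty_iff_eq_empty.mp hne'
        rw [minCov, this, Real.sInf_empty]
        exact le_max_left _ _
    have : minCov Y ≤ maxMinCov X := le_csSup hbdd ⟨Y, rfl⟩
    linarith
  · -- degenerate case: covDim univ = 0, so S 1 = ∅ and S μ = ∅ for μ ≥ 1
    have hcov0 : covDim (Set.univ : Set X) = 0 := by
      rw [covDim, Set.not_nonempty_iff_eq_empty.mp hDuniv, Real.sInf_empty]
    have hS1 : S 1 = ∅ := by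
      have h01 : S 1 = fatPoints (S 0) d := by
        have := hsucc 0
        rwa [zero_add] at this
      rw [h01, h0]
      apply Set.diff_eq_empty.mpr
      intro x _
      exact ⟨Set.univ, ⟨relOpenIn_self _, hcov0 ▸ hd0⟩, trivial⟩
    have hempty : ∀ μ : Ordinal, 1 ≤ μ → S μ = ∅ := by
      intro μ
      induction μ using Ordinal.induction with
      | h μ IH =>
        intro h1
        rcases Ordinal.zero_or_succ_or_isSuccLimit μ with h | ⟨ν, rfl⟩ | hl
        · subst h; simp at h1
        · rw [← Ordinal.add_one_eq_succ, hsucc]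
          rcases eq_zero_or_pos ν with rfl | hν
          · rw [h0]
            have := hS1
            rw [show (1 : Ordinal) = 0 + 1 by rw [zero_add], hsucc, h0] at this
            exact this
          · have hν1 : (1 : Ordinal) ≤ ν := Order.one_le_iff_pos.mpr hν
            have hlt : ν < Order.succ ν := Order.lt_succ ν
            rw [IH ν hlt hν1]
            simp [fatPoints]
        · rw [hlim μ hl]
          have h1μ : (1 : Ordinal) ∈ Set.Iio μ := Ordinal.one_lt_of_isSuccLimit hl
          exact Set.eq_empty_of_subset_empty (hS1 ▸ Set.biInter_subset_of_mem h1μ)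
    rcases eq_zero_or_pos lam with rfl | hlam
    · have : d ≤ covDim (Set.univ : Set X) := h0 ▸ hA Y (relOpenIn_self Y) hne
      rw [hcov0] at this
      linarith
    · have := hempty lam (Order.one_le_iff_pos.mpr hlam)
      rw [← hY] at this
      exact Set.not_nonempty_empty (this ▸ hne)
end
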